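/- For every real time t, the real part of α(t) β(t)* is given explicitly by Re(α(t) β(t)*) = (Δ/J₁)(1 − cos((e₁ − e₂)t)) / (2(J₁² + Δ²)/J₁²) = Δ J₁ (1 − cos(2Ωt)) / (2(J₁² + Δ²)). -/

import Mathlib

/-! With `u = exp (-i a)` and `v = exp (-i b)` on the unit circle,
`(u x - v y) * conj (u - v) = x + y - x u v̄ - y ū v`, whose real part is
`(x + y) (1 - Re (u v̄)) = (x + y) (1 - cos (a - b))`. For `α β*` the prefactor becomes
`(ξ₁ + ξ₂) / (ξ₁ - ξ₂)² = (2Δ / J₁) / (2Ω / J₁)²`, and `Ω² = J₁² + Δ²`, `e₁ - e₂ = 2Ω`. -/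

open Complex Matrix
open ComplexConjugate

lemma re_mul_star_sub_of_norm_eq_one {u v : ℂ} (hu : ‖u‖ = 1) (hv : ‖v‖ = 1) (x y : ℝ) :
    ((u * x - v * y) * star (u - v)).re = (x + y) * (1 - (u * star v).re) := by
  have hu2 : u.re * u.re + u.im * u.im = 1 := by
    rw [← normSq_apply, ← Complex.sq_norm, hu, one_pow]
  have hv2 : v.re * v.re + v.im * v.im = 1 := by
    rw [← normSq_apply, ← Complex.sq_norm, hv, one_pow]
  simp only [star_def, mul_re, sub_re, sub_im, map_sub, conj_re, conj_im, mul_im, ofReal_re,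
    ofReal_im]
  linear_combination x * hu2 + y * hv2

lemma norm_exp_neg_I_mul_ofReal (a : ℝ) : ‖exp (-I * a)‖ = 1 := by
  rw [neg_mul, ← mul_neg, ← ofReal_neg, norm_exp_I_mul_ofReal]

lemma re_exp_neg_I_mul_ofReal_mul_star (a b : ℝ) :
    (exp (-I * a) * star (exp (-I * b))).re = Real.cos (a - b) := by
  have h : -I * a + conj (-I * b) = ((b - a : ℝ) : ℂ) * I := by
    simp only [map_mul, map_neg, conj_I, conj_ofReal, ofReal_sub]
    ring
  rw [star_def, ← Complex.exp_conj, ← exp_add, h, exp_ofReal_mul_I_re, ← Real.cos_neg, neg_sub]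

lemma re_div_ofReal_mul_star_div_ofReal (z w : ℂ) (r : ℝ) :
    (z / r * star (w / r)).re = (z * star w).re / r ^ 2 := by
  rw [star_div₀, star_def, conj_ofReal, div_mul_div_comm, ← ofReal_mul, div_ofReal_re, sq]

lemma re_div_sub_mul_star_div_sub (a b x y : ℝ) :
    ((exp (-I * a) * x - exp (-I * b) * y) / (x - y) *
        star ((exp (-I * a) - exp (-I * b)) / (x - y))).re =
      (x + y) * (1 - Real.cos (a - b)) / (x - y) ^ 2 := by
  rw [← ofReal_sub, re_div_ofReal_mul_star_div_ofReal,
    re_mul_star_sub_of_norm_eq_one (norm_exp_neg_I_mul_ofReal a) (norm_exp_neg_I_mul_ofReal b),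
    re_exp_neg_I_mul_ofReal_mul_star]

theorem stmt_12_general (J1 J2 t : ℝ) (hJ1 : J1 ≠ 0)
    (Δ Ω e1 e2 ξ1 ξ2 : ℝ) (α β : ℂ)
    (hΩ : Ω = Real.sqrt (J1 ^ 2 + Δ ^ 2))
    (he1 : e1 = Ω - J2) (he2 : e2 = -Ω - J2)
    (hξ1 : ξ1 = (Δ + Ω) / J1) (hξ2 : ξ2 = (Δ - Ω) / J1)
    (hα : α = (Complex.exp (-Complex.I * ((e1 * t : ℝ) : ℂ)) * (ξ1 : ℂ) -
        Complex.exp (-Complex.I * ((e2 * t : ℝ) : ℂ)) * (ξ2 : ℂ)) / ((ξ1 : ℂ) - (ξ2 : ℂ)))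
    (hβ : β = (Complex.exp (-Complex.I * ((e1 * t : ℝ) : ℂ)) -
        Complex.exp (-Complex.I * ((e2 * t : ℝ) : ℂ))) / ((ξ1 : ℂ) - (ξ2 : ℂ))) :
    (α * star β).re = (Δ / J1) * (1 - Real.cos ((e1 - e2) * t)) / (2 * (J1 ^ 2 + Δ ^ 2) / J1 ^ 2) ∧
    (α * star β).re = Δ * J1 * (1 - Real.cos (2 * Ω * t)) / (2 * (J1 ^ 2 + Δ ^ 2)) := by
  have hΩsq : Ω ^ 2 = J1 ^ 2 + Δ ^ 2 := by rw [hΩ, Real.sq_sqrt (by positivity)]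
  have hΩ0 : Ω ≠ 0 := by
    rw [← pow_ne_zero_iff two_ne_zero, hΩsq]
    positivity
  have hre : (α * star β).re = (ξ1 + ξ2) * (1 - Real.cos ((e1 - e2) * t)) / (ξ1 - ξ2) ^ 2 := by
    rw [hα, hβ, re_div_sub_mul_star_div_sub, ← sub_mul]
  have hgap : (e1 - e2) * t = 2 * Ω * t := by rw [he1, he2]; ring
  have hfirst : (α * star β).re =
      (Δ / J1) * (1 - Real.cos ((e1 - e2) * t)) / (2 * (J1 ^ 2 + Δ ^ 2) / J1 ^ 2) := by
    have hsum : ξ1 + ξ2 = 2 * Δ / J1 := by rw [hξ1, hξ2]; ring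
    have hdiff : ξ1 - ξ2 = 2 * Ω / J1 := by rw [hξ1, hξ2]; ring
    rw [hre, hsum, hdiff, ← hΩsq]
    field_simp
  refine ⟨hfirst, ?_⟩
  rw [hfirst, hgap, ← hΩsq]
  field_simp

theorem stmt_12 (ωb ωc J1 J2 t : ℝ) (hωb : 0 < ωb) (hωc : 0 < ωc) (hJ1 : J1 ≠ 0)
    (Δ Ω e1 e2 ξ1 ξ2 p : ℝ) (α β : ℂ)
    (hΔ : Δ = ωb - ωc) (hΩ : Ω = Real.sqrt (J1 ^ 2 + Δ ^ 2))
    (he1 : e1 = Ω - J2) (he2 : e2 = -Ω - J2)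
    (hξ1 : ξ1 = (Δ + Ω) / J1) (hξ2 : ξ2 = (Δ - Ω) / J1)
    (hα : α = (Complex.exp (-Complex.I * ((e1 * t : ℝ) : ℂ)) * (ξ1 : ℂ) -
        Complex.exp (-Complex.I * ((e2 * t : ℝ) : ℂ)) * (ξ2 : ℂ)) / ((ξ1 : ℂ) - (ξ2 : ℂ)))
    (hβ : β = (Complex.exp (-Complex.I * ((e1 * t : ℝ) : ℂ)) -
        Complex.exp (-Complex.I * ((e2 * t : ℝ) : ℂ))) / ((ξ1 : ℂ) - (ξ2 : ℂ)))
    (hp : p = ‖α‖ ^ 2) :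
    (α * star β).re = (Δ / J1) * (1 - Real.cos ((e1 - e2) * t)) / (2 * (J1 ^ 2 + Δ ^ 2) / J1 ^ 2) ∧
    (α * star β).re = Δ * J1 * (1 - Real.cos (2 * Ω * t)) / (2 * (J1 ^ 2 + Δ ^ 2)) :=
  stmt_12_general J1 J2 t hJ1 Δ Ω e1 e2 ξ1 ξ2 α β hΩ he1 he2 hξ1 hξ2 hα hβ
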